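/- arXiv:2401.18025 — 6 statements merged into one kernel-verified Lean document; each statement's English description precedes it below -/
import Mathlib

section
/- Let X be a connected graph (its vertex set equipped with the path metric), let Y be a coarsely geodesic subset of the vertices of X, and let 𝒵 be a collection of vertex subsets such that for every Z ∈ 𝒵 the graph obtained from X by removing the vertices of Z is disconnected (i.e. each Z separates X). If 𝒵 does not coarsely separate Y, then there exists a constant L ≥ 0 such that for every Z ∈ 𝒵, at most one connected component C of X \ Z contains a vertex of Y at distance greater than L from Z. -/
open Set

variable {V : Type*}

/-- The graph metric, as a real-valued distance on the vertices. -/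
noncomputable def gdist (G : SimpleGraph V) (u v : V) : ℝ := (G.dist u v : ℝ)

/-- The `α`-neighbourhood of a set of vertices, for the graph metric. -/
noncomputable def gthick (G : SimpleGraph V) (A : Set V) (α : ℝ) : Set V :=
  {x | ∃ a ∈ A, gdist G x a ≤ α}

/-- `c 0, …, c n` is a `k`-path in `Y` for the graph metric. -/
noncomputable def GIsKPath (G : SimpleGraph V) (k : ℝ) (Y : Set V) (c : ℕ → V) (n : ℕ) :
    Prop :=
  (∀ i ≤ n, c i ∈ Y) ∧ ∀ i < n, gdist G (c i) (c (i + 1)) ≤ k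

/-- `a` and `b` are connected by a `k`-path in `Y`, for the graph metric. -/
noncomputable def GKConn (G : SimpleGraph V) (k : ℝ) (Y : Set V) (a b : V) : Prop :=
  ∃ n : ℕ, ∃ c : ℕ → V, c 0 = a ∧ c n = b ∧ GIsKPath G k Y c n

/-- `Y` is `k`-coarsely connected for the graph metric. -/
noncomputable def GKCoarselyConnected (G : SimpleGraph V) (k : ℝ) (Y : Set V) : Prop :=
  ∀ a ∈ Y, ∀ b ∈ Y, GKConn G k Y a b

/-- `C` is a `k`-coarsely connected component of `Y`, for the graph metric. -/
noncomputable def GIsKComponent (G : SimpleGraph V) (k : ℝ) (Y C : Set V) : Prop :=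
  C ⊆ Y ∧ GKCoarselyConnected G k C ∧
    ∀ C' : Set V, C ⊆ C' → C' ⊆ Y → GKCoarselyConnected G k C' → C' = C

/-- `Y` is coarsely geodesic for the graph metric. -/
noncomputable def GCoarselyGeodesic (G : SimpleGraph V) (Y : Set V) : Prop :=
  ∃ k > (0 : ℝ), ∃ σ : ℝ → ℝ, ∀ a ∈ Y, ∀ b ∈ Y, ∃ n : ℕ, ∃ c : ℕ → V,
    c 0 = a ∧ c n = b ∧ GIsKPath G k Y c n ∧ (n : ℝ) ≤ σ (gdist G a b)

/-- The collection `𝒵` of vertex sets coarsely separates `Y`, for the graph metric. -/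
noncomputable def GCoarselySeparates (G : SimpleGraph V) (𝒵 : Set (Set V)) (Y : Set V) :
    Prop :=
  ∃ k > (0 : ℝ), ∃ L ≥ (0 : ℝ), GKCoarselyConnected G k Y ∧
    ∀ D ≥ (0 : ℝ), ∃ Z ∈ 𝒵, ∃ C₁ C₂ : Set V,
      GIsKComponent G k (Y \ gthick G Z L) C₁ ∧ GIsKComponent G k (Y \ gthick G Z L) C₂ ∧
      C₁ ≠ C₂ ∧
      (∃ p ∈ C₁, ∀ z ∈ Z, D ≤ gdist G p z) ∧ (∃ q ∈ C₂, ∀ z ∈ Z, D ≤ gdist G q z)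

/-- `u` and `v` are in the same connected component of the graph minus the vertex set `Z`:
they are joined by a walk avoiding `Z`. -/
def ReachAvoid (G : SimpleGraph V) (Z : Set V) (u v : V) : Prop :=
  ∃ p : G.Walk u v, ∀ w ∈ p.support, w ∉ Z

/-! ### Auxiliary lemmas -/

/-- The single-step relation underlying `k`-paths in `Y`. -/
def GKRel (G : SimpleGraph V) (k : ℝ) (Y : Set V) (a b : V) : Prop :=
  a ∈ Y ∧ b ∈ Y ∧ gdist G a b ≤ k

lemma gkrel_symm (G : SimpleGraph V) (k : ℝ) (Y : Set V) :
    Symmetric (GKRel G k Y) := by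
  intro a b ⟨ha, hb, hd⟩
  exact ⟨hb, ha, by unfold gdist at *; rwa [SimpleGraph.dist_comm]⟩

lemma gkconn_refl {G : SimpleGraph V} {k : ℝ} {Y : Set V} {a : V} (ha : a ∈ Y) :
    GKConn G k Y a a :=
  ⟨0, fun _ => a, rfl, rfl, fun _ _ => ha, fun i h => absurd h (Nat.not_lt_zero i)⟩

lemma gkconn_tail {G : SimpleGraph V} {k : ℝ} {Y : Set V} {a b b' : V}
    (h : GKConn G k Y a b) (hb' : b' ∈ Y) (hd : gdist G b b' ≤ k) :
    GKConn G k Y a b' := by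
  obtain ⟨n, c, hc0, hcn, hmem, hstep⟩ := h
  refine ⟨n + 1, fun i => if i ≤ n then c i else b', by simpa using hc0, by simp, ?_, ?_⟩
  · intro i hi
    by_cases h : i ≤ n
    · simpa [h] using hmem i h
    · simpa [h] using hb'
  · intro i hi
    rcases lt_or_ge i n with h | h
    · simpa [h.le, Nat.succ_le_of_lt h] using hstep i h
    · have : i = n := le_antisymm (Nat.lt_succ_iff.mp hi) h
      subst this
      simpa [hcn] using hd

lemma gkconn_iff {G : SimpleGraph V} {k : ℝ} {Y : Set V} {a b : V} :
    GKConn G k Y a b ↔ a ∈ Y ∧ b ∈ Y ∧ Relation.ReflTransGen (GKRel G k Y) a b := by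
  constructor
  · rintro ⟨n, c, rfl, rfl, hmem, hstep⟩
    refine ⟨hmem 0 (Nat.zero_le n), hmem n le_rfl, ?_⟩
    have key : ∀ m, m ≤ n → Relation.ReflTransGen (GKRel G k Y) (c 0) (c m) := by
      intro m
      induction m with
      | zero => intro _; exact Relation.ReflTransGen.refl
      | succ m ih =>
        intro hm
        exact (ih (Nat.le_of_succ_le hm)).tail
          ⟨hmem m (Nat.le_of_succ_le hm), hmem (m + 1) hm, hstep m (Nat.lt_of_succ_le hm)⟩
    exact key n le_rfl
  · rintro ⟨ha, hb, h⟩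
    clear hb
    induction h with
    | refl => exact gkconn_refl ha
    | tail _ hbc ih => exact gkconn_tail ih hbc.2.1 hbc.2.2

lemma gkconn_mono {G : SimpleGraph V} {k : ℝ} {Y Y' : Set V} (hYY : Y ⊆ Y') {a b : V}
    (h : GKConn G k Y a b) : GKConn G k Y' a b := by
  obtain ⟨n, c, hc0, hcn, hmem, hstep⟩ := h
  exact ⟨n, c, hc0, hcn, fun i hi => hYY (hmem i hi), hstep⟩

/-- The `k`-component of a point `u` of `W`. -/
lemma isKComponent_conn {G : SimpleGraph V} {k : ℝ} {W : Set V} {u : V} (hu : u ∈ W) :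
    GIsKComponent G k W {x | GKConn G k W u x} := by
  set C : Set V := {x | GKConn G k W u x} with hC
  have huC : u ∈ C := gkconn_refl hu
  have hCW : C ⊆ W := fun x hx => (gkconn_iff.mp hx).2.1
  have key : ∀ a ∈ C, Relation.ReflTransGen (GKRel G k C) u a := by
    intro a ha
    have h := (gkconn_iff.mp ha).2.2
    clear ha
    induction h with
    | refl => exact Relation.ReflTransGen.refl
    | @tail b c hub hbc ih =>
      have hbC : b ∈ C := gkconn_iff.mpr ⟨hu, hbc.1, hub⟩
      have hcC : c ∈ C := gkconn_iff.mpr ⟨hu, hbc.2.1, hub.tail hbc⟩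
      exact ih.tail ⟨hbC, hcC, hbc.2.2⟩
  refine ⟨hCW, ?_, ?_⟩
  · intro a ha b hb
    refine gkconn_iff.mpr ⟨ha, hb, ?_⟩
    exact Relation.ReflTransGen.trans
      (letI : Std.Symm (GKRel G k C) := ⟨gkrel_symm G k C⟩; Std.Symm.symm (r := Relation.ReflTransGen (GKRel G k C)) _ _ (key a ha)) (key b hb)
  · intro C' hsub hsubW hcc
    refine le_antisymm ?_ hsub
    intro x hx
    exact gkconn_mono hsubW (hcc u (hsub huC) x hx)

/-- Let `X` be a connected graph, `Y` a coarsely geodesic set of vertices and `𝒵` a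
collection of vertex sets, each of which separates the graph. If `𝒵` does not coarsely
separate `Y`, then there is `L ≥ 0` such that for every `Z ∈ 𝒵` at most one connected
component of `X \ Z` contains a vertex of `Y` at distance `> L` from `Z`. -/
theorem at_most_one_deep_component
    (G : SimpleGraph V) (hconn : G.Connected)
    (Y : Set V) (hY : GCoarselyGeodesic G Y) (𝒵 : Set (Set V))
    (hZsep : ∀ Z ∈ 𝒵, ∃ u v : V, u ∉ Z ∧ v ∉ Z ∧ ¬ ReachAvoid G Z u v)
    (hnot : ¬ GCoarselySeparates G 𝒵 Y) :
    ∃ L ≥ (0 : ℝ), ∀ Z ∈ 𝒵, ∀ u v : V, u ∈ Y → v ∈ Y → u ∉ Z → v ∉ Z →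
      (∀ z ∈ Z, L < gdist G u z) → (∀ z ∈ Z, L < gdist G v z) → ReachAvoid G Z u v := by
  obtain ⟨k, hk, σ, hσ⟩ := hY
  have hYcc : GKCoarselyConnected G k Y := by
    intro a ha b hb
    obtain ⟨n, c, h1, h2, h3, _⟩ := hσ a ha b hb
    exact ⟨n, c, h1, h2, h3⟩
  have hD' : ∃ D ≥ (0 : ℝ), ∀ Z ∈ 𝒵, ¬ ∃ C₁ C₂ : Set V,
      GIsKComponent G k (Y \ gthick G Z k) C₁ ∧ GIsKComponent G k (Y \ gthick G Z k) C₂ ∧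
      C₁ ≠ C₂ ∧
      (∃ p ∈ C₁, ∀ z ∈ Z, D ≤ gdist G p z) ∧ (∃ q ∈ C₂, ∀ z ∈ Z, D ≤ gdist G q z) := by
    by_contra h
    push_neg at h
    exact hnot ⟨k, hk, k, hk.le, hYcc, h⟩
  obtain ⟨D, hD, hDall⟩ := hD'
  refine ⟨max D k, le_trans hD (le_max_left _ _), ?_⟩
  intro Z hZ u v huY hvY huZ hvZ hu hv
  set W : Set V := Y \ gthick G Z k with hW
  have hmemW : ∀ x, x ∈ Y → (∀ z ∈ Z, max D k < gdist G x z) → x ∈ W := by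
    intro x hx hdeep
    refine ⟨hx, fun hmem => ?_⟩
    obtain ⟨z, hzZ, hzd⟩ := hmem
    exact absurd hzd (not_le.mpr (lt_of_le_of_lt (le_max_right D k) (hdeep z hzZ)))
  have huW : u ∈ W := hmemW u huY hu
  have hvW : v ∈ W := hmemW v hvY hv
  -- u and v are k-connected in W
  have key : GKConn G k W u v := by
    by_contra hne
    apply hDall Z hZ
    refine ⟨{x | GKConn G k W u x}, {x | GKConn G k W v x},
      isKComponent_conn huW, isKComponent_conn hvW, ?_, ?_, ?_⟩
    · intro heq
      have : v ∈ {x | GKConn G k W u x} := heq ▸ (gkconn_refl hvW)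
      exact hne this
    · exact ⟨u, gkconn_refl huW, fun z hz => le_trans (le_max_left D k) (hu z hz).le⟩
    · exact ⟨v, gkconn_refl hvW, fun z hz => le_trans (le_max_left D k) (hv z hz).le⟩
  -- points of W are not in Z
  have hWnotZ : ∀ x ∈ W, x ∉ Z := by
    intro x hx hxZ
    exact hx.2 ⟨x, hxZ, by simp [gdist, SimpleGraph.dist_self, hk.le]⟩
  -- turn the k-path into a walk avoiding Z
  have hreach : ∀ a b : V, a ∈ W → Relation.ReflTransGen (GKRel G k W) a b →
      ReachAvoid G Z a b := by
    intro a b haW h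
    classical
    induction h with
    | refl =>
      exact ⟨SimpleGraph.Walk.nil, by
        intro w hw
        rw [SimpleGraph.Walk.support_nil, List.mem_singleton] at hw
        rw [hw]
        exact hWnotZ a haW⟩
    | @tail x y hax hxy ih =>
      obtain ⟨p, hp⟩ := ih
      obtain ⟨q, hq⟩ := (hconn x y).exists_walk_length_eq_dist
      refine ⟨p.append q, ?_⟩
      intro w hw
      rw [SimpleGraph.Walk.mem_support_append_iff] at hw
      rcases hw with hw | hw
      · exact hp w hw
      · intro hwZ
        apply hxy.1.2
        refine ⟨w, hwZ, ?_⟩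
        have h1 : G.dist x w ≤ (q.takeUntil w hw).length := SimpleGraph.dist_le _
        have h2 : (q.takeUntil w hw).length ≤ q.length :=
          SimpleGraph.Walk.length_takeUntil_le q hw
        have h3 : (G.dist x w : ℝ) ≤ (G.dist x y : ℝ) := by
          rw [← hq]; exact_mod_cast le_trans h1 h2
        exact le_trans h3 hxy.2.2
  exact hreach u v huW (gkconn_iff.mp key).2.2
end

section
/- Let k ≥ 1, let X be a k-coarsely connected uniformly discrete metric space of bounded geometry, let {A_x(r)}_{x∈X, r≥r₀} be an α-persistent family (α ∈ (0,1]), and set δ = 1 − α/2. Let S ⊆ X be a subset and let (X_i)_{i∈I} be a partition of X \ S. Assume there exist r ≥ r₀, points x, y ∈ X, and an index i₀ ∈ I such that |A_x(r) ∩ X_{i₀}| ≥ δ|A(r)| and |A_y(r) ∩ X_{i₀}| < δ|A(r)|. Then there exists a point z ∈ X such that |A_z(r) ∩ X_i| ≤ δ|A(r)| for every i ∈ I. Moreover, if the partition (X_i)_{i∈I} consists of the k-coarsely connected components of X \ S, then A_z(r) ∩ S is a (k,δ)-cut of A_z(r). -/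
open Metric Set Filter

/-- The `α`-neighbourhood `A^{+α}` of a subset `A` of a metric space. -/
def thickSet {X : Type*} [PseudoMetricSpace X] (A : Set X) (α : ℝ) : Set X :=
  {x | ∃ a ∈ A, dist x a ≤ α}

/-- `c 0, …, c n` is a `k`-path (of length `n`) in `Y`. -/
def IsKPath {X : Type*} [PseudoMetricSpace X] (k : ℝ) (Y : Set X) (c : ℕ → X) (n : ℕ) : Prop :=
  (∀ i ≤ n, c i ∈ Y) ∧ ∀ i < n, dist (c i) (c (i + 1)) ≤ k

/-- `a` and `b` are connected by a `k`-path in `Y`. -/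
def KConn {X : Type*} [PseudoMetricSpace X] (k : ℝ) (Y : Set X) (a b : X) : Prop :=
  ∃ n : ℕ, ∃ c : ℕ → X, c 0 = a ∧ c n = b ∧ IsKPath k Y c n

/-- `Y` is `k`-coarsely connected. -/
def KCoarselyConnected {X : Type*} [PseudoMetricSpace X] (k : ℝ) (Y : Set X) : Prop :=
  ∀ a ∈ Y, ∀ b ∈ Y, KConn k Y a b

/-- `C` is a `k`-coarsely connected component of `Y`, i.e. a maximal
`k`-coarsely connected subset of `Y`. -/
def IsKComponent {X : Type*} [PseudoMetricSpace X] (k : ℝ) (Y C : Set X) : Prop :=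
  C ⊆ Y ∧ KCoarselyConnected k C ∧
    ∀ C' : Set X, C ⊆ C' → C' ⊆ Y → KCoarselyConnected k C' → C' = C

/-- `Y` is `k`-coarsely geodesic with control function `σ`. -/
def KCoarselyGeodesicWith {X : Type*} [PseudoMetricSpace X] (k : ℝ) (σ : ℝ → ℝ) (Y : Set X) :
    Prop :=
  ∀ a ∈ Y, ∀ b ∈ Y, ∃ n : ℕ, ∃ c : ℕ → X,
    c 0 = a ∧ c n = b ∧ IsKPath k Y c n ∧ (n : ℝ) ≤ σ (dist a b)

/-- `Y` is `k`-coarsely geodesic. -/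
def KCoarselyGeodesic {X : Type*} [PseudoMetricSpace X] (k : ℝ) (Y : Set X) : Prop :=
  ∃ σ : ℝ → ℝ, KCoarselyGeodesicWith k σ Y

/-- `Y` is coarsely geodesic. -/
def CoarselyGeodesic {X : Type*} [PseudoMetricSpace X] (Y : Set X) : Prop :=
  ∃ k > (0 : ℝ), KCoarselyGeodesic k Y

/-- The collection `𝒵` of subsets of `X` coarsely separates the subset `Y`. -/
def CoarselySeparates {X : Type*} [PseudoMetricSpace X] (𝒵 : Set (Set X)) (Y : Set X) : Prop :=
  ∃ k > (0 : ℝ), ∃ L ≥ (0 : ℝ), KCoarselyConnected k Y ∧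
    ∀ D ≥ (0 : ℝ), ∃ Z ∈ 𝒵, ∃ C₁ C₂ : Set X,
      IsKComponent k (Y \ thickSet Z L) C₁ ∧ IsKComponent k (Y \ thickSet Z L) C₂ ∧ C₁ ≠ C₂ ∧
      (∃ p ∈ C₁, ∀ z ∈ Z, D ≤ dist p z) ∧ (∃ q ∈ C₂, ∀ z ∈ Z, D ≤ dist q z)

/-- A uniformly discrete metric space of bounded geometry: distinct points are at distance
`≥ 1` and balls are finite, of uniformly bounded cardinality. -/
def UDBG (X : Type*) [PseudoMetricSpace X] : Prop :=
  (∀ x y : X, x ≠ y → 1 ≤ dist x y) ∧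
    ∀ r : ℝ, ∃ N : ℕ, ∀ x : X, (Metric.closedBall x r).Finite ∧ (Metric.closedBall x r).ncard ≤ N

/-- `A` is an `α`-persistent family (for the coarse connectivity constant `k`,
defined for radii `r ≥ r₀`). -/
def Persistent {X : Type*} [PseudoMetricSpace X] (k r₀ α : ℝ) (A : X → ℝ → Set X) : Prop :=
  ∀ r, r₀ ≤ r →
    (∀ x : X, A x r ⊆ Metric.closedBall x (4 * r)) ∧
    (∀ x y : X, (A x r).ncard = (A y r).ncard) ∧
    (∀ x y : X, dist x y ≤ k → α * ((A x r).ncard : ℝ) ≤ ((A x r ∩ A y r).ncard : ℝ))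

/-- `S` is an `(r, δ)`-cut of `A`: `S ⊆ A` and every `r`-coarsely connected component of
`A \ S` has volume at most `δ|A|`. -/
def IsCut {X : Type*} [PseudoMetricSpace X] (r δ : ℝ) (A S : Set X) : Prop :=
  S ⊆ A ∧ ∀ C : Set X, IsKComponent r (A \ S) C → ((C.ncard : ℝ) ≤ δ * (A.ncard : ℝ))

/-- `cut_r^δ(A)`: the minimal volume of an `(r, δ)`-cut of `A`. -/
noncomputable def cutVal {X : Type*} [PseudoMetricSpace X] (r δ : ℝ) (A : Set X) : ℕ :=
  sInf {n : ℕ | ∃ S : Set X, IsCut r δ A S ∧ S.ncard = n}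

private lemma kconn_mono' {X : Type*} [PseudoMetricSpace X] {k : ℝ} {Y Y' : Set X} (h : Y ⊆ Y')
    {a b : X} (hc : KConn k Y a b) : KConn k Y' a b := by
  obtain ⟨n, c, h0, hn, hm, hd⟩ := hc
  exact ⟨n, c, h0, hn, fun i hi => h (hm i hi), hd⟩

private lemma kconn_symm' {X : Type*} [PseudoMetricSpace X] {k : ℝ} {Y : Set X} {a b : X}
    (h : KConn k Y a b) : KConn k Y b a := by
  obtain ⟨n, c, h0, hn, hm, hd⟩ := h
  refine ⟨n, fun i => c (n - i), by simp [hn], by simp [h0], fun i hi => hm _ (by omega), ?_⟩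
  intro i hi
  show dist (c (n - i)) (c (n - (i + 1))) ≤ k
  have he : n - i = (n - (i + 1)) + 1 := by omega
  rw [he, dist_comm]
  exact hd _ (by omega)

private lemma kconn_trans' {X : Type*} [PseudoMetricSpace X] {k : ℝ} {Y : Set X} {a b c : X}
    (h1 : KConn k Y a b) (h2 : KConn k Y b c) : KConn k Y a c := by
  obtain ⟨n, f, hf0, hfn, hfm, hfd⟩ := h1
  obtain ⟨m, g, hg0, hgn, hgm, hgd⟩ := h2
  refine ⟨n + m, fun i => if i ≤ n then f i else g (i - n), ?_, ?_, ?_, ?_⟩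
  · simp [hf0]
  · by_cases hm0 : m = 0
    · subst hm0
      simp only [Nat.add_zero, le_refl, if_pos]
      rw [hfn, ← hg0, hgn]
    · have : ¬ (n + m ≤ n) := by omega
      simp only [this, if_false]
      simpa using hgn
  · intro i hi
    by_cases hin : i ≤ n
    · simp only [hin, if_true]; exact hfm i hin
    · simp only [hin, if_false]; exact hgm (i - n) (by omega)
  · intro i hi
    by_cases h1' : i + 1 ≤ n
    · have hin : i ≤ n := by omega
      simp only [hin, if_true, h1', if_true]
      exact hfd i (by omega)
    · by_cases hin : i ≤ n
      · have hie : i = n := by omega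
        subst hie
        show dist (if i ≤ i then f i else g (i - i)) (if i + 1 ≤ i then f (i+1) else g (i + 1 - i)) ≤ k
        rw [if_pos le_rfl, if_neg h1']
        have he2 : i + 1 - i = 1 := by omega
        rw [he2, hfn, ← hg0]
        exact hgd 0 (by omega)
      · simp only [hin, if_false, h1', if_false]
        have : i + 1 - n = (i - n) + 1 := by omega
        rw [this]
        exact hgd (i - n) (by omega)

/-- Proposition: moving a persistent family along a path from one side of a partition to
the other produces a set of the family meeting every piece of the partition in at most a
`δ = 1 − α/2` proportion; and if the pieces are the `k`-coarsely connected components of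
`X \ S`, then `A_z(r) ∩ S` is a `(k, δ)`-cut of `A_z(r)`. -/
theorem persistent_family_cut
    {X : Type*} [MetricSpace X] (hud : UDBG X) (k : ℝ) (hk : 1 ≤ k)
    (hconn : KCoarselyConnected k (Set.univ : Set X))
    (r₀ α : ℝ) (hα0 : 0 < α) (hα1 : α ≤ 1)
    (A : X → ℝ → Set X) (hpers : Persistent k r₀ α A)
    (S : Set X) {I : Type*} (Xi : I → Set X)
    (hdisj : Pairwise (Function.onFun Disjoint Xi))
    (hcover : (⋃ i, Xi i) = Set.univ \ S)
    (r : ℝ) (hr : r₀ ≤ r) (x y : X) (i₀ : I)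
    (hx : (1 - α / 2) * ((A x r).ncard : ℝ) ≤ ((A x r ∩ Xi i₀).ncard : ℝ))
    (hy : ((A y r ∩ Xi i₀).ncard : ℝ) < (1 - α / 2) * ((A y r).ncard : ℝ)) :
    ∃ z : X,
      (∀ i : I, ((A z r ∩ Xi i).ncard : ℝ) ≤ (1 - α / 2) * ((A z r).ncard : ℝ)) ∧
      ((∀ i : I, IsKComponent k (Set.univ \ S) (Xi i)) →
        IsCut k (1 - α / 2) (A z r) (A z r ∩ S)) := by
  obtain ⟨h1, h2, h3⟩ := hpers r hr
  obtain ⟨N, hN⟩ := hud.2 (4 * r)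
  have hfin : ∀ z : X, (A z r).Finite := fun z => (hN z).1.subset (h1 z)
  set M : ℝ := ((A x r).ncard : ℝ) with hM
  have hcard : ∀ z : X, ((A z r).ncard : ℝ) = M := fun z => by
    rw [hM]; exact_mod_cast congrArg Nat.cast (h2 z x)
  have hMnn : (0:ℝ) ≤ M := Nat.cast_nonneg _
  -- step lemma
  have step : ∀ u v : X, dist u v ≤ k → ∀ i : I,
      (1 - α/2) * M ≤ ((A u r ∩ Xi i).ncard : ℝ) →
      (α/2) * M ≤ ((A v r ∩ Xi i).ncard : ℝ) ∧
      ∀ j : I, j ≠ i → ((A v r ∩ Xi j).ncard : ℝ) ≤ (1 - α/2) * M := by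
    intro u v huv i hui
    have hαM : α * M ≤ ((A u r ∩ A v r).ncard : ℝ) := by
      have := h3 u v huv
      rwa [hcard u] at this
    have hdiff : ((A u r \ Xi i).ncard : ℝ) ≤ (α/2) * M := by
      have heq : ((A u r ∩ Xi i).ncard : ℝ) + ((A u r \ Xi i).ncard : ℝ) = M := by
        rw [← hcard u]
        exact_mod_cast congrArg Nat.cast
          (Set.ncard_inter_add_ncard_diff_eq_ncard (A u r) (Xi i) (hfin u))
      linarith
    have hsub1 : A u r ∩ A v r ⊆ (A v r ∩ Xi i) ∪ (A u r \ Xi i) := by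
      intro w hw
      by_cases hwi : w ∈ Xi i
      · exact Or.inl ⟨hw.2, hwi⟩
      · exact Or.inr ⟨hw.1, hwi⟩
    have h4 : ((A u r ∩ A v r).ncard : ℝ)
        ≤ ((A v r ∩ Xi i).ncard : ℝ) + ((A u r \ Xi i).ncard : ℝ) := by
      have b1 : (A u r ∩ A v r).ncard ≤ ((A v r ∩ Xi i) ∪ (A u r \ Xi i)).ncard :=
        Set.ncard_le_ncard hsub1 (((hfin v).inter_of_left _).union ((hfin u).diff))
      have b2 : ((A v r ∩ Xi i) ∪ (A u r \ Xi i)).ncard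
          ≤ (A v r ∩ Xi i).ncard + (A u r \ Xi i).ncard :=
        Set.ncard_union_le _ _
      exact_mod_cast b1.trans b2
    have hvi : (α/2) * M ≤ ((A v r ∩ Xi i).ncard : ℝ) := by linarith
    refine ⟨hvi, fun j hji => ?_⟩
    have hdisj' : Disjoint (A v r ∩ Xi j) (A v r ∩ Xi i) :=
      (hdisj hji).mono inter_subset_right inter_subset_right
    have hu : ((A v r ∩ Xi j) ∪ (A v r ∩ Xi i)).ncard
        = (A v r ∩ Xi j).ncard + (A v r ∩ Xi i).ncard :=
      Set.ncard_union_eq hdisj' ((hfin v).inter_of_left _) ((hfin v).inter_of_left _)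
    have hle : ((A v r ∩ Xi j) ∪ (A v r ∩ Xi i)).ncard ≤ (A v r).ncard :=
      Set.ncard_le_ncard (union_subset inter_subset_left inter_subset_left) (hfin v)
    rw [hu] at hle
    have hle' : ((A v r ∩ Xi j).ncard : ℝ) + ((A v r ∩ Xi i).ncard : ℝ) ≤ M := by
      rw [← hcard v]; exact_mod_cast hle
    linarith
  obtain ⟨n, c, hc0, hcn, hcmem, hcd⟩ := hconn x (mem_univ x) y (mem_univ y)
  have main : ∀ m, m ≤ n →
      (∃ z, ∀ i, ((A z r ∩ Xi i).ncard : ℝ) ≤ (1 - α/2) * M) ∨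
      (1 - α/2) * M ≤ ((A (c m) r ∩ Xi i₀).ncard : ℝ) := by
    intro m
    induction m with
    | zero => intro _; right; rw [hc0]; exact hx
    | succ m ih =>
      intro hm1
      rcases ih (by omega) with h | h
      · exact Or.inl h
      · have hd := hcd m (by omega)
        obtain ⟨hvi, hvj⟩ := step (c m) (c (m+1)) hd i₀ h
        by_cases hcase : ((A (c (m+1)) r ∩ Xi i₀).ncard : ℝ) ≤ (1 - α/2) * M
        · refine Or.inl ⟨c (m+1), fun i => ?_⟩
          by_cases hii : i = i₀
          · subst hii; exact hcase
          · exact hvj i hii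
        · exact Or.inr (le_of_lt (lt_of_not_ge hcase))
  have hzex : ∃ z, ∀ i, ((A z r ∩ Xi i).ncard : ℝ) ≤ (1 - α/2) * M := by
    rcases main n le_rfl with h | h
    · exact h
    · exfalso; rw [hcn] at h; rw [hcard y] at hy; linarith
  obtain ⟨z, hz⟩ := hzex
  refine ⟨z, fun i => by rw [hcard z]; exact hz i, ?_⟩
  intro hcomp
  refine ⟨inter_subset_left, ?_⟩
  intro C hC
  obtain ⟨hCsub, hCconn, _⟩ := hC
  have hsub2 : A z r \ (A z r ∩ S) ⊆ Set.univ \ S :=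
    fun w hw => ⟨trivial, fun hwS => hw.2 ⟨hw.1, hwS⟩⟩
  rcases C.eq_empty_or_nonempty with hE | ⟨p, hp⟩
  · rw [hE]
    simp only [Set.ncard_empty, Nat.cast_zero]
    have : (0:ℝ) ≤ 1 - α/2 := by linarith
    exact mul_nonneg this (Nat.cast_nonneg _)
  · have hpX : p ∈ ⋃ i, Xi i := by rw [hcover]; exact hsub2 (hCsub hp)
    obtain ⟨i, hpi⟩ := mem_iUnion.1 hpX
    have hCXi : C ⊆ Xi i := by
      have hU : KCoarselyConnected k (Xi i ∪ C) := by
        have connC : ∀ q ∈ C, KConn k (Xi i ∪ C) p q := fun q hq =>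
          kconn_mono' subset_union_right (hCconn p hp q hq)
        have connX : ∀ q ∈ Xi i, KConn k (Xi i ∪ C) p q := fun q hq =>
          kconn_mono' subset_union_left ((hcomp i).2.1 p hpi q hq)
        rintro a (ha | ha) b (hb | hb)
        · exact kconn_mono' subset_union_left ((hcomp i).2.1 a ha b hb)
        · exact kconn_trans' (kconn_symm' (connX a ha)) (connC b hb)
        · exact kconn_trans' (kconn_symm' (connC a ha)) (connX b hb)
        · exact kconn_mono' subset_union_right (hCconn a ha b hb)
      have heq := (hcomp i).2.2 (Xi i ∪ C) subset_union_left
        (union_subset (hcomp i).1 ((hCsub.trans hsub2))) hU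
      intro w hw
      rw [← heq]
      exact Or.inr hw
    have hCA : C ⊆ A z r ∩ Xi i := fun w hw => ⟨(hCsub hw).1, hCXi hw⟩
    calc (C.ncard : ℝ) ≤ ((A z r ∩ Xi i).ncard : ℝ) := by
          exact_mod_cast Set.ncard_le_ncard hCA ((hfin z).inter_of_left _)
      _ ≤ (1 - α/2) * M := hz i
      _ = (1 - α/2) * ((A z r).ncard : ℝ) := by rw [hcard z]
end

section
/- Let X be a k-coarsely connected uniformly discrete metric space of bounded geometry (k ≥ 1) and let r ≥ k. Let A ⊆ X be a bounded subset and δ ∈ (0,1). Then cut_r^δ(A) ≥ λ · h_r(A) · |A|, where λ = min(1/4, (1−δ)/2) / β_X(r). -/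
open Metric Set Filter

/-- `β_X(r)`: the supremum of the cardinalities of balls of radius `r` in `X`. -/
noncomputable def ballVolSup (X : Type*) [PseudoMetricSpace X] (r : ℝ) : ℕ :=
  ⨆ x : X, (Metric.closedBall x r).ncard

/-- The `r`-Cheeger constant of a bounded subset `A`:
`h_r(A) = min { |∂_r B ∩ A| / |B| : B ⊆ A, 0 < |B| ≤ |A|/2 }`, where `∂_r B = B^{+r} \ B`. -/
noncomputable def cheeger {X : Type*} [PseudoMetricSpace X] (r : ℝ) (A : Set X) : ℝ :=
  sInf {v : ℝ | ∃ B : Set X, B ⊆ A ∧ 0 < B.ncard ∧ (B.ncard : ℝ) ≤ (A.ncard : ℝ) / 2 ∧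
    v = (((thickSet B r \ B) ∩ A).ncard : ℝ) / (B.ncard : ℝ)}

/-!
If `S` is a cut of `A` much smaller than `A`, then `A \ S` has most of the volume of `A` and its
`r`-components are small, so some union `B` of them has volume between `m|A|` and `|A|/2`, where
`m = min(1/4, (1-δ)/2)`: take a maximal union of volume at most `|A|/2` and, if it is still too
small, either a component outside it or the complement of that component. Points of `A` within
distance `r` of `B` but outside `B` cannot lie in `A \ S`, so `h_r(A)|B| ≤ |∂_r B ∩ A| ≤ |S|`.
If instead the cut is large, `|S| ≥ m|A|` suffices since `h_r(A) ≤ β_X(r)`.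
-/

section CoarseConnectivity

variable {X : Type*} [PseudoMetricSpace X] {k : ℝ} {Y W B C : Set X} {a b c x : X}

def KStep (k : ℝ) (Y : Set X) (x y : X) : Prop := x ∈ Y ∧ y ∈ Y ∧ dist x y ≤ k

instance : Std.Symm (KStep k Y) :=
  ⟨fun x y ⟨hx, hy, h⟩ => ⟨hy, hx, dist_comm x y ▸ h⟩⟩

theorem KConn.refl (ha : a ∈ Y) : KConn k Y a a :=
  ⟨0, fun _ => a, rfl, rfl, fun _ _ => ha, fun _ h => absurd h (Nat.not_lt_zero _)⟩

theorem KConn.cons (hab : KStep k Y a b) (h : KConn k Y b c) : KConn k Y a c := by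
  obtain ⟨n, p, rfl, rfl, hmem, hdist⟩ := h
  refine ⟨n + 1, fun i => Nat.casesOn i a p, rfl, rfl, fun i hi => ?_, fun i hi => ?_⟩
  · cases i with
    | zero => exact hab.1
    | succ i => exact hmem i (by omega)
  · cases i with
    | zero => exact hab.2.2
    | succ i => exact hdist i (by omega)

theorem kConn_iff_reflTransGen : KConn k Y a b ↔ a ∈ Y ∧ Relation.ReflTransGen (KStep k Y) a b := by
  constructor
  · rintro ⟨n, p, rfl, rfl, hmem, hdist⟩
    refine ⟨hmem 0 (Nat.zero_le _), ?_⟩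
    suffices ∀ i ≤ n, Relation.ReflTransGen (KStep k Y) (p 0) (p i) from this n le_rfl
    intro i hi
    induction i with
    | zero => rfl
    | succ i ih => exact (ih (by omega)).tail ⟨hmem i (by omega), hmem (i + 1) hi, hdist i hi⟩
  · rintro ⟨ha, h⟩
    induction h using Relation.ReflTransGen.head_induction_on with
    | refl => exact KConn.refl ha
    | head hab _ ih => exact (ih hab.2.1).cons hab

theorem KConn.mem_right (h : KConn k Y a b) : b ∈ Y := by
  obtain ⟨n, p, -, rfl, hmem, -⟩ := h
  exact hmem n le_rfl

theorem KConn.mono (hYW : Y ⊆ W) (h : KConn k Y a b) : KConn k W a b := by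
  obtain ⟨n, p, h0, hn, hmem, hdist⟩ := h
  exact ⟨n, p, h0, hn, fun i hi => hYW (hmem i hi), hdist⟩

theorem KConn.symm (h : KConn k Y a b) : KConn k Y b a :=
  kConn_iff_reflTransGen.2
    ⟨h.mem_right, Std.Symm.symm _ _ (kConn_iff_reflTransGen.1 h).2⟩

theorem KConn.trans (hab : KConn k Y a b) (hbc : KConn k Y b c) : KConn k Y a c :=
  kConn_iff_reflTransGen.2
    ⟨(kConn_iff_reflTransGen.1 hab).1,
      (kConn_iff_reflTransGen.1 hab).2.trans (kConn_iff_reflTransGen.1 hbc).2⟩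

theorem KConn.of_isKPath {p : ℕ → X} {n i : ℕ} (hp : IsKPath k Y p n) (hi : i ≤ n) :
    KConn k Y (p 0) (p i) :=
  ⟨i, p, rfl, rfl, fun j hj => hp.1 j (hj.trans hi), fun j hj => hp.2 j (hj.trans_le hi)⟩

def kComponent (k : ℝ) (W : Set X) (x : X) : Set X := {y | KConn k W x y}

theorem kComponent_subset : kComponent k W x ⊆ W := fun _ hy => KConn.mem_right hy

theorem mem_kComponent_self (hx : x ∈ W) : x ∈ kComponent k W x := KConn.refl hx

theorem isKComponent_kComponent (hx : x ∈ W) : IsKComponent k W (kComponent k W x) := by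
  refine ⟨kComponent_subset, fun a ha b hb => ?_, fun C' hC' hC'W hconn => ?_⟩
  · obtain ⟨n, p, rfl, rfl, hp⟩ := (KConn.symm ha).trans hb
    exact ⟨n, p, rfl, rfl, fun i hi => ha.trans (KConn.of_isKPath hp hi), hp.2⟩
  · exact hC'.antisymm' fun y hy => (hconn x (hC' (mem_kComponent_self hx)) y hy).mono hC'W

def IsKSaturated (k : ℝ) (W B : Set X) : Prop := B ⊆ W ∧ ∀ x ∈ B, kComponent k W x ⊆ B

theorem isKSaturated_empty : IsKSaturated k W ∅ :=
  ⟨empty_subset _, fun _ hx => hx.elim⟩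

theorem isKSaturated_kComponent : IsKSaturated k W (kComponent k W x) :=
  ⟨kComponent_subset, fun _ hy _ hz => KConn.trans hy hz⟩

theorem IsKSaturated.union (hB : IsKSaturated k W B) (hC : IsKSaturated k W C) :
    IsKSaturated k W (B ∪ C) :=
  ⟨union_subset hB.1 hC.1, fun x hx => hx.elim (fun h => (hB.2 x h).trans subset_union_left)
    (fun h => (hC.2 x h).trans subset_union_right)⟩

theorem isKSaturated_diff_kComponent : IsKSaturated k W (W \ kComponent k W x) :=
  ⟨sdiff_subset, fun _ hy _ hz => ⟨kComponent_subset hz, fun hxz => hy.2 (KConn.trans hxz hz.symm)⟩⟩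

theorem IsKSaturated.disjoint_kComponent (hB : IsKSaturated k W B) (hx : x ∉ B) :
    Disjoint B (kComponent k W x) :=
  disjoint_left.2 fun _ hyB hy => hx (hB.2 _ hyB (KConn.symm hy))

theorem IsKSaturated.thickSet_diff_subset (hB : IsKSaturated k W B) :
    thickSet B k \ B ⊆ Wᶜ := by
  rintro x ⟨⟨b, hb, hxb⟩, hxB⟩ hxW
  exact hxB (hB.2 b hb (KConn.cons ⟨hxW, hB.1 hb, hxb⟩ (KConn.refl (hB.1 hb))).symm)

end CoarseConnectivity

section Volume

variable {X : Type*} [PseudoMetricSpace X] {k r : ℝ} {A B W : Set X}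

theorem exists_isKSaturated_ncard_mem_Icc (hW : W.Finite) {a m δ : ℝ} (hm : m ≤ 1 / 4)
    (hmδ : m ≤ (1 - δ) / 2) (hWa : (W.ncard : ℝ) ≤ a) (hWm : (1 - m) * a ≤ W.ncard)
    (hcomp : ∀ x ∈ W, ((kComponent k W x).ncard : ℝ) ≤ δ * a) :
    ∃ B, IsKSaturated k W B ∧ (B.ncard : ℝ) ∈ Icc (m * a) (a / 2) := by
  have ha : 0 ≤ a := (Nat.cast_nonneg _).trans hWa
  obtain ⟨B, ⟨hB, hBa⟩, hBmax⟩ := (hW.finite_subsets.subset fun B hB => hB.1.1).exists_maximalFor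
    ncard {B | IsKSaturated k W B ∧ (B.ncard : ℝ) ≤ a / 2}
    ⟨∅, isKSaturated_empty, by simpa using div_nonneg ha zero_le_two⟩
  have hBfin := hW.subset hB.1
  by_cases hBm : m * a ≤ B.ncard
  · exact ⟨B, hB, hBm, hBa⟩
  obtain ⟨x, hxW, hxB⟩ : ∃ x ∈ W, x ∉ B := not_subset.1 fun hWB => hBm <| by
    have : (W.ncard : ℝ) ≤ B.ncard := by exact_mod_cast ncard_le_ncard hWB hBfin
    nlinarith
  set C := kComponent k W x
  have hCfin : C.Finite := hW.subset kComponent_subset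
  have hCpos : 0 < C.ncard := (ncard_pos hCfin).2 ⟨x, mem_kComponent_self hxW⟩
  have hBC : (B ∪ C).ncard = B.ncard + C.ncard :=
    ncard_union_eq (hB.disjoint_kComponent hxB) hBfin hCfin
  have hBCa : a / 2 < (B.ncard : ℝ) + C.ncard := by
    by_contra! h
    have hle : ((B ∪ C).ncard : ℝ) ≤ a / 2 := by rw [hBC]; push_cast; exact h
    have := hBmax (j := B ∪ C) ⟨hB.union isKSaturated_kComponent, hle⟩ (by omega)
    omega
  by_cases hCa : (C.ncard : ℝ) ≤ a / 2
  · exact ⟨C, isKSaturated_kComponent, by nlinarith, hCa⟩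
  · have hWC : ((W \ C).ncard : ℝ) = W.ncard - C.ncard := cast_ncard_sdiff kComponent_subset hW
    refine ⟨W \ C, isKSaturated_diff_kComponent, ?_, ?_⟩
    · nlinarith [hcomp x hxW]
    · linarith

theorem thickSet_eq_biUnion : thickSet B r = ⋃ b ∈ B, closedBall b r := by
  ext x
  simp [thickSet, mem_closedBall]

theorem ncard_thickSet_le {N : ℕ} (hB : B.Finite) (hball : ∀ x : X, (closedBall x r).ncard ≤ N) :
    (thickSet B r).ncard ≤ N * B.ncard := by
  rw [thickSet_eq_biUnion, ← hB.coe_toFinset, Finset.set_biUnion_coe, ncard_coe_finset]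
  calc _ ≤ ∑ b ∈ hB.toFinset, (closedBall b r).ncard := Finset.set_ncard_biUnion_le _ _
    _ ≤ ∑ _b ∈ hB.toFinset, N := Finset.sum_le_sum fun b _ => hball b
    _ = N * hB.toFinset.card := by rw [Finset.sum_const, smul_eq_mul, mul_comm]

theorem UDBG.finite_closedBall (hud : UDBG X) (x : X) (r : ℝ) : (closedBall x r).Finite :=
  ((hud.2 r).choose_spec x).1

theorem UDBG.ncard_closedBall_le (hud : UDBG X) (x : X) (r : ℝ) :
    (closedBall x r).ncard ≤ ballVolSup X r := by
  obtain ⟨N, hN⟩ := hud.2 r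
  exact le_ciSup ⟨N, by rintro _ ⟨y, rfl⟩; exact (hN y).2⟩ x

theorem UDBG.finite_of_isBounded (hud : UDBG X) (hA : Bornology.IsBounded A) : A.Finite := by
  rcases A.eq_empty_or_nonempty with rfl | ⟨x, -⟩
  · exact finite_empty
  obtain ⟨R, hR⟩ := hA.subset_closedBall x
  exact (hud.finite_closedBall x R).subset hR

theorem UDBG.ncard_thickSet_diff_inter_le (hud : UDBG X) (hB : B.Finite) :
    ((thickSet B r \ B) ∩ A).ncard ≤ ballVolSup X r * B.ncard := by
  have hfin : (thickSet B r).Finite := by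
    rw [thickSet_eq_biUnion]
    exact hB.biUnion fun b _ => hud.finite_closedBall b r
  exact (ncard_le_ncard (inter_subset_left.trans sdiff_subset) hfin).trans
    (ncard_thickSet_le hB (hud.ncard_closedBall_le · r))

end Volume

-- No nonemptiness or boundedness is needed: `sInf` of an empty or unbounded-below set of reals is `0`.
theorem Real.sInf_le_of_forall_le {s : Set ℝ} {c : ℝ} (hc : 0 ≤ c) (h : ∀ x ∈ s, x ≤ c) :
    sInf s ≤ c := by
  rcases s.eq_empty_or_nonempty with rfl | ⟨x, hx⟩
  · rwa [Real.sInf_empty]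
  by_cases hs : BddBelow s
  · exact (csInf_le hs hx).trans (h x hx)
  · rwa [Real.sInf_of_not_bddBelow hs]

section CheegerCut

variable {X : Type*} [PseudoMetricSpace X] {r δ m : ℝ} {A B S : Set X}

theorem cheeger_nonneg : 0 ≤ cheeger r A :=
  Real.sInf_nonneg (by rintro _ ⟨B, -, -, -, rfl⟩; positivity)

theorem cheeger_le (hBA : B ⊆ A) (hB : 0 < B.ncard) (hBA2 : (B.ncard : ℝ) ≤ A.ncard / 2) :
    cheeger r A ≤ ((thickSet B r \ B) ∩ A).ncard / B.ncard :=
  csInf_le ⟨0, by rintro _ ⟨B, -, -, -, rfl⟩; positivity⟩ ⟨B, hBA, hB, hBA2, rfl⟩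

theorem UDBG.cheeger_le_ballVolSup (hud : UDBG X) : cheeger r A ≤ ballVolSup X r := by
  refine Real.sInf_le_of_forall_le (Nat.cast_nonneg _) ?_
  rintro _ ⟨B, -, hB, -, rfl⟩
  rw [div_le_iff₀ (by exact_mod_cast hB)]
  exact_mod_cast hud.ncard_thickSet_diff_inter_le (finite_of_ncard_pos hB)

theorem isCut_self (hδ : 0 ≤ δ) : IsCut r δ A A := by
  refine ⟨subset_rfl, fun C hC => ?_⟩
  have hC0 : C ⊆ ∅ := by simpa using hC.1
  rw [subset_empty_iff.1 hC0, ncard_empty, Nat.cast_zero]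
  positivity

theorem exists_isCut_ncard_eq_cutVal (hδ : 0 ≤ δ) :
    ∃ S, IsCut r δ A S ∧ S.ncard = cutVal r δ A :=
  Nat.sInf_mem (s := {n | ∃ S, IsCut r δ A S ∧ S.ncard = n}) ⟨_, A, isCut_self hδ, rfl⟩

theorem IsCut.mul_cheeger_mul_le_ncard (hS : IsCut r δ A S) (hA : A.Finite) (hm : m ≤ 1 / 4)
    (hmδ : m ≤ (1 - δ) / 2) (hSm : (S.ncard : ℝ) < m * A.ncard) :
    m * cheeger r A * A.ncard ≤ S.ncard := by
  have hW : ((A \ S).ncard : ℝ) = A.ncard - S.ncard := cast_ncard_sdiff hS.1 hA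
  obtain ⟨B, hB, hBm, hBA⟩ := exists_isKSaturated_ncard_mem_Icc (hA.subset sdiff_subset) hm hmδ
    (by exact_mod_cast ncard_le_ncard sdiff_subset hA) (by linarith)
    fun x hx => hS.2 _ (isKComponent_kComponent hx)
  have hBpos : (0 : ℝ) < B.ncard := (by positivity : (0 : ℝ) ≤ S.ncard).trans_lt hSm |>.trans_le hBm
  have hboundary : ((thickSet B r \ B) ∩ A).ncard ≤ S.ncard := by
    refine ncard_le_ncard (fun x ⟨hx, hxA⟩ => ?_) (hA.subset hS.1)
    by_contra hxS
    exact hB.thickSet_diff_subset hx ⟨hxA, hxS⟩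
  have hcheeger := cheeger_le (r := r) (hB.1.trans sdiff_subset) (by exact_mod_cast hBpos) hBA
  rw [le_div_iff₀ hBpos] at hcheeger
  calc m * cheeger r A * A.ncard = cheeger r A * (m * A.ncard) := by ring
    _ ≤ cheeger r A * B.ncard := mul_le_mul_of_nonneg_left hBm cheeger_nonneg
    _ ≤ S.ncard := hcheeger.trans (by exact_mod_cast hboundary)

end CheegerCut

theorem cutVal_ge_cheeger_general
    {X : Type*} [MetricSpace X] (hud : UDBG X)
    (r : ℝ) (A : Set X) (hA : Bornology.IsBounded A)
    (δ : ℝ) (hδ0 : 0 < δ) (hδ1 : δ < 1) :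
    (min (1 / 4) ((1 - δ) / 2) / (ballVolSup X r : ℝ)) * cheeger r A * (A.ncard : ℝ) ≤
      (cutVal r δ A : ℝ) := by
  set m := min (1 / 4) ((1 - δ) / 2)
  have hm : 0 < m := lt_min (by norm_num) (by linarith)
  obtain ⟨S, hS, hScard⟩ := exists_isCut_ncard_eq_cutVal (r := r) (A := A) hδ0.le
  rw [← hScard]
  rcases le_or_gt (m * A.ncard) S.ncard with hlarge | hsmall
  · have hβ : cheeger r A / ballVolSup X r ≤ 1 :=
      div_le_one_of_le₀ hud.cheeger_le_ballVolSup (Nat.cast_nonneg _)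
    calc m / ballVolSup X r * cheeger r A * A.ncard
        = m * A.ncard * (cheeger r A / ballVolSup X r) := by ring
      _ ≤ m * A.ncard := mul_le_of_le_one_right (by positivity) hβ
      _ ≤ S.ncard := hlarge
  · have hβ : m / ballVolSup X r ≤ m := by
      rcases Nat.eq_zero_or_pos (ballVolSup X r) with h | h
      · simp [h, hm.le]
      · exact div_le_self hm.le (by exact_mod_cast h)
    calc m / ballVolSup X r * cheeger r A * A.ncard ≤ m * cheeger r A * A.ncard := by
          gcongr
          exact cheeger_nonneg
      _ ≤ S.ncard := hS.mul_cheeger_mul_le_ncard (hud.finite_of_isBounded hA) (min_le_left _ _)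
          (min_le_right _ _) hsmall

/-- `cut_r^δ(A) ≥ λ·h_r(A)·|A|` with `λ = min(1/4, (1−δ)/2) / β_X(r)`. -/
theorem cutVal_ge_cheeger
    {X : Type*} [MetricSpace X] (hud : UDBG X) (k : ℝ) (hk : 1 ≤ k)
    (hconn : KCoarselyConnected k (Set.univ : Set X))
    (r : ℝ) (hr : k ≤ r) (A : Set X) (hA : Bornology.IsBounded A)
    (δ : ℝ) (hδ0 : 0 < δ) (hδ1 : δ < 1) :
    (min (1 / 4) ((1 - δ) / 2) / (ballVolSup X r : ℝ)) * cheeger r A * (A.ncard : ℝ) ≤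
      (cutVal r δ A : ℝ) :=
  cutVal_ge_cheeger_general hud r A hA δ hδ0 hδ1
end

section
/- Let X be a metric space with bounded geometry at scale 1/5, and write |·| for the 1/5-volume. Let ε ≥ 1, let A ⊆ X be a bounded subset, and let Z ⊆ A be a maximal ε-separated subset of A (i.e. any two distinct points of Z are at distance > ε, and every point of A lies within distance ε of Z). Set α = sup_{x∈X} |B(x,2ε)|, which is finite by bounded geometry. Then for every subset B ⊆ A: (1/α)·|B| ≤ #(B^{+ε} ∩ Z) ≤ α·|B|, where # denotes cardinality. -/
/-!
Two points of an `ε`-separated set `Z` never lie in a common ball of radius `1/5`, since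
`2/5 < ε`; so `#(B^{+ε} ∩ Z)` is at most the number of `1/5`-balls needed to cover
`B^{+ε}`. Thickening a minimal cover of `B` by `ε ≤ 2ε - 1/5` covers `B^{+ε}` by `|B|` balls of
radius `2ε`, each of volume at most `α`, whence the upper bound. Conversely, by maximality of
`Z`, the `2ε`-balls around the points of `B^{+ε} ∩ Z` cover `B`, whence the lower bound.
-/

open Metric Set

/-- `X` has bounded geometry at scale `s`: every ball of radius `r` can be covered by a
uniformly bounded number of closed balls of radius `s`. -/
def BddGeomAtScale (X : Type*) [PseudoMetricSpace X] (s : ℝ) : Prop :=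
  ∀ r ≥ (0 : ℝ), ∃ n : ℕ, ∀ x : X, ∃ F : Finset X,
    F.card ≤ n ∧ Metric.closedBall x r ⊆ ⋃ c ∈ F, Metric.closedBall c s

/-- The `s`-volume of a subset `A`: the minimal number of closed balls of radius `s`
needed to cover `A`. -/
noncomputable def svol {X : Type*} [PseudoMetricSpace X] (s : ℝ) (A : Set X) : ℕ :=
  sInf {n : ℕ | ∃ F : Finset X, F.card = n ∧ A ⊆ ⋃ c ∈ F, Metric.closedBall c s}

section Coverings

variable {X : Type*} [PseudoMetricSpace X] {s : ℝ}

def IsFinitelyCoverable (s : ℝ) (A : Set X) : Prop :=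
  ∃ F : Finset X, A ⊆ ⋃ c ∈ F, closedBall c s

lemma IsFinitelyCoverable.mono {A B : Set X} (hB : IsFinitelyCoverable s B) (hAB : A ⊆ B) :
    IsFinitelyCoverable s A :=
  let ⟨F, hF⟩ := hB; ⟨F, hAB.trans hF⟩

lemma svol_le_card {A : Set X} {F : Finset X} (h : A ⊆ ⋃ c ∈ F, closedBall c s) :
    svol s A ≤ F.card :=
  Nat.sInf_le ⟨F, rfl, h⟩

lemma IsFinitelyCoverable.exists_card_eq_svol {A : Set X} (hA : IsFinitelyCoverable s A) :
    ∃ F : Finset X, F.card = svol s A ∧ A ⊆ ⋃ c ∈ F, closedBall c s :=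
  let ⟨F, hF⟩ := hA
  Nat.sInf_mem (s := {n | ∃ F : Finset X, F.card = n ∧ A ⊆ ⋃ c ∈ F, closedBall c s})
    ⟨F.card, F, rfl, hF⟩

lemma svol_mono {A B : Set X} (hB : IsFinitelyCoverable s B) (hAB : A ⊆ B) :
    svol s A ≤ svol s B := by
  obtain ⟨F, hFcard, hF⟩ := hB.exists_card_eq_svol
  exact hFcard ▸ svol_le_card (hAB.trans hF)

section BiUnion

variable {ι : Type*} {t : Finset ι} {C : ι → Set X}

lemma biUnion_subset_biUnion_closedBall [DecidableEq X] {G : ι → Finset X}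
    (hG : ∀ i ∈ t, C i ⊆ ⋃ c ∈ G i, closedBall c s) :
    ⋃ i ∈ t, C i ⊆ ⋃ c ∈ t.biUnion G, closedBall c s := by
  rw [Finset.set_biUnion_biUnion]
  exact iUnion₂_mono hG

lemma IsFinitelyCoverable.biUnion (hC : ∀ i ∈ t, IsFinitelyCoverable s (C i)) :
    IsFinitelyCoverable s (⋃ i ∈ t, C i) := by
  classical
  choose! G hG using hC
  exact ⟨t.biUnion G, biUnion_subset_biUnion_closedBall hG⟩

lemma svol_biUnion_le (hC : ∀ i ∈ t, IsFinitelyCoverable s (C i)) :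
    svol s (⋃ i ∈ t, C i) ≤ ∑ i ∈ t, svol s (C i) := by
  classical
  choose! G hGcard hG using fun i hi => (hC i hi).exists_card_eq_svol
  calc svol s (⋃ i ∈ t, C i) ≤ (t.biUnion G).card :=
        svol_le_card (biUnion_subset_biUnion_closedBall hG)
    _ ≤ ∑ i ∈ t, (G i).card := Finset.card_biUnion_le
    _ = ∑ i ∈ t, svol s (C i) := Finset.sum_congr rfl hGcard

end BiUnion

namespace BddGeomAtScale

lemma isFinitelyCoverable_closedBall (h : BddGeomAtScale X s) (x : X) {r : ℝ} (hr : 0 ≤ r) :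
    IsFinitelyCoverable s (closedBall x r) :=
  let ⟨_, hn⟩ := h r hr; let ⟨F, _, hF⟩ := hn x; ⟨F, hF⟩

lemma isFinitelyCoverable_of_isBounded (h : BddGeomAtScale X s) {A : Set X}
    (hA : Bornology.IsBounded A) : IsFinitelyCoverable s A := by
  rcases A.eq_empty_or_nonempty with rfl | ⟨a, -⟩
  · exact ⟨∅, empty_subset _⟩
  obtain ⟨r, hr⟩ := hA.subset_closedBall a
  exact (isFinitelyCoverable_closedBall h a (le_max_right r 0)).mono
    (hr.trans (closedBall_subset_closedBall (le_max_left r 0)))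

lemma bddAbove_svol_closedBall (h : BddGeomAtScale X s) {r : ℝ} (hr : 0 ≤ r) :
    BddAbove (range fun x : X => (svol s (closedBall x r) : ℝ)) := by
  obtain ⟨n, hn⟩ := h r hr
  refine ⟨n, forall_mem_range.2 fun x => ?_⟩
  obtain ⟨F, hFn, hF⟩ := hn x
  exact_mod_cast (svol_le_card hF).trans hFn

lemma svol_biUnion_closedBall_le (h : BddGeomAtScale X s) {r : ℝ} (hr : 0 ≤ r)
    (F : Finset X) :
    (svol s (⋃ c ∈ F, closedBall c r) : ℝ) ≤ F.card * ⨆ x : X, (svol s (closedBall x r) : ℝ) :=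
  calc (svol s (⋃ c ∈ F, closedBall c r) : ℝ) ≤ ∑ c ∈ F, (svol s (closedBall c r) : ℝ) := by
        exact_mod_cast svol_biUnion_le fun c _ => isFinitelyCoverable_closedBall h c hr
    _ ≤ F.card * ⨆ x : X, (svol s (closedBall x r) : ℝ) := by
        rw [← nsmul_eq_mul]
        exact F.sum_le_card_nsmul _ _ fun c _ => le_ciSup (bddAbove_svol_closedBall h hr) c

end BddGeomAtScale

lemma thickSet_subset_biUnion_closedBall {B : Set X} {F : Finset X} {ε : ℝ}
    (hB : B ⊆ ⋃ c ∈ F, closedBall c s) : thickSet B ε ⊆ ⋃ c ∈ F, closedBall c (ε + s) := by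
  rintro x ⟨b, hb, hxb⟩
  obtain ⟨c, hc, hbc⟩ := mem_iUnion₂.1 (hB hb)
  exact mem_iUnion₂.2 ⟨c, hc, (dist_triangle x b c).trans (add_le_add hxb hbc)⟩

section Separated

variable {S : Set X} (hS : ∀ z ∈ S, ∀ z' ∈ S, z ≠ z' → 2 * s < dist z z')
include hS

lemma subsingleton_inter_closedBall_of_separated (c : X) : (S ∩ closedBall c s).Subsingleton := by
  rintro z ⟨hz, hzc⟩ z' ⟨hz', hz'c⟩
  by_contra hne
  have := (hS z hz z' hz' hne).trans_le (dist_triangle_right z z' c)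
  rw [mem_closedBall] at hzc hz'c
  linarith

lemma encard_le_card_of_separated {T : Finset X} (hT : S ⊆ ⋃ c ∈ T, closedBall c s) :
    S.encard ≤ T.card :=
  calc S.encard ≤ (⋃ c ∈ T, S ∩ closedBall c s).encard := by
        refine encard_le_encard fun z hz => ?_
        obtain ⟨c, hc, hzc⟩ := mem_iUnion₂.1 (hT hz)
        exact mem_iUnion₂.2 ⟨c, hc, hz, hzc⟩
    _ ≤ ∑ c ∈ T, (S ∩ closedBall c s).encard := T.set_encard_biUnion_le _
    _ ≤ ∑ _c ∈ T, 1 := Finset.sum_le_sum fun c _ =>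
        encard_le_one_iff_subsingleton.2 (subsingleton_inter_closedBall_of_separated hS c)
    _ = T.card := by simp

end Separated

end Coverings

theorem svol_vs_net_count_general
    {X : Type*} [MetricSpace X] (hbg : BddGeomAtScale X (1 / 5))
    (ε : ℝ) (hε : 1 ≤ ε) (A : Set X) (hA : Bornology.IsBounded A)
    (Z : Set X)
    (hsepZ : ∀ z ∈ Z, ∀ z' ∈ Z, z ≠ z' → ε < dist z z')
    (hmax : ∀ a ∈ A, ∃ z ∈ Z, dist a z ≤ ε)
    (B : Set X) (hB : B ⊆ A) :
    (svol (1 / 5) B : ℝ) / ((⨆ x : X, svol (1 / 5) (Metric.closedBall x (2 * ε))) : ℝ) ≤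
        ((thickSet B ε ∩ Z).ncard : ℝ) ∧
      ((thickSet B ε ∩ Z).ncard : ℝ) ≤
        ((⨆ x : X, svol (1 / 5) (Metric.closedBall x (2 * ε))) : ℝ) * (svol (1 / 5) B : ℝ) := by
  open BddGeomAtScale in
  have h2ε : 0 ≤ 2 * ε := by linarith
  have hvol := svol_biUnion_closedBall_le hbg h2ε
  have hcov (F : Finset X) : IsFinitelyCoverable (1 / 5) (⋃ c ∈ F, closedBall c (2 * ε)) :=
    .biUnion fun c _ => isFinitelyCoverable_closedBall hbg c h2ε
  set S := thickSet B ε ∩ Z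
  obtain ⟨F, hFcard, hF⟩ :=
    (isFinitelyCoverable_of_isBounded hbg (hA.subset hB)).exists_card_eq_svol
  obtain ⟨T, hTcard, hT⟩ := (hcov F).exists_card_eq_svol
  have hST : S ⊆ ⋃ c ∈ T, closedBall c (1 / 5) := fun z hz =>
    hT <| biUnion_mono subset_rfl (fun c _ => closedBall_subset_closedBall (by linarith))
      (thickSet_subset_biUnion_closedBall hF hz.1)
  have hsep : ∀ z ∈ S, ∀ z' ∈ S, z ≠ z' → 2 * (1 / 5) < dist z z' :=
    fun z hz z' hz' hne => by linarith [hsepZ z hz.2 z' hz'.2 hne]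
  obtain ⟨hfin, hcard⟩ :=
    encard_le_coe_iff_finite_ncard_le.1 (encard_le_card_of_separated hsep hST)
  have hBS : B ⊆ ⋃ z ∈ hfin.toFinset, closedBall z (2 * ε) := fun b hb => by
    obtain ⟨z, hz, hbz⟩ := hmax b (hB hb)
    exact mem_iUnion₂.2 ⟨z, hfin.mem_toFinset.2 ⟨⟨b, hb, dist_comm b z ▸ hbz⟩, hz⟩,
      mem_closedBall.2 (by linarith)⟩
  constructor
  · refine div_le_of_le_mul₀ (Real.iSup_nonneg fun _ => by positivity) (by positivity) ?_
    calc (svol (1 / 5) B : ℝ) ≤ svol (1 / 5) (⋃ z ∈ hfin.toFinset, closedBall z (2 * ε)) := by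
          exact_mod_cast svol_mono (hcov _) hBS
      _ ≤ _ := by rw [ncard_eq_toFinset_card _ hfin]; exact hvol _
  · calc (S.ncard : ℝ) ≤ svol (1 / 5) (⋃ c ∈ F, closedBall c (2 * ε)) := by
          exact_mod_cast hTcard ▸ hcard
      _ ≤ _ := (hvol F).trans_eq (by rw [hFcard, mul_comm])

/-- Comparison between the `1/5`-volume of a subset `B ⊆ A` and the number of points of a
maximal `ε`-separated net `Z ⊆ A` lying in `B^{+ε}`:
`(1/α)|B| ≤ #(B^{+ε} ∩ Z) ≤ α|B|` with `α = sup_x |B(x, 2ε)|`. -/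
theorem svol_vs_net_count
    {X : Type*} [MetricSpace X] (hbg : BddGeomAtScale X (1 / 5))
    (ε : ℝ) (hε : 1 ≤ ε) (A : Set X) (hA : Bornology.IsBounded A)
    (Z : Set X) (hZA : Z ⊆ A)
    (hsepZ : ∀ z ∈ Z, ∀ z' ∈ Z, z ≠ z' → ε < dist z z')
    (hmax : ∀ a ∈ A, ∃ z ∈ Z, dist a z ≤ ε)
    (B : Set X) (hB : B ⊆ A) :
    (svol (1 / 5) B : ℝ) / ((⨆ x : X, svol (1 / 5) (Metric.closedBall x (2 * ε))) : ℝ) ≤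
        ((thickSet B ε ∩ Z).ncard : ℝ) ∧
      ((thickSet B ε ∩ Z).ncard : ℝ) ≤
        ((⨆ x : X, svol (1 / 5) (Metric.closedBall x (2 * ε))) : ℝ) * (svol (1 / 5) B : ℝ) :=
  svol_vs_net_count_general hbg ε hε A hA Z hsepZ hmax B hB
end

section
/- Let (Ω,Σ,μ) be a measure space, let K be a measurable set admitting a finite measurable partition K = S ⊔ X₁ ⊔ … ⊔ X_p, and let B ⊆ K be a measurable set with 0 < μ(B) < ∞. If μ(B ∩ X_i) ≤ (3/5)·μ(B) for every i ∈ {1,…,p}, then either μ(B ∩ S) ≥ (3/20)·μ(B), or there exists a subset J ⊆ {1,…,p} such that (1/4)·μ(B) ≤ μ(B ∩ ⋃_{j∈J} X_j) ≤ (1/2)·μ(B). -/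
open MeasureTheory
open scoped ENNReal

open Finset in
lemma real_helper (p : ℕ) (a : Fin p → ℝ) (m : ℝ) (hm : 0 < m)
    (h0 : ∀ i, 0 ≤ a i) (h35 : ∀ i, a i ≤ 3/5 * m)
    (hlo : 17/20 * m ≤ ∑ i, a i) (hhi : ∑ i, a i ≤ m) :
    ∃ J : Finset (Fin p), 1/4 * m ≤ ∑ j ∈ J, a j ∧ ∑ j ∈ J, a j ≤ 1/2 * m := by
  by_cases hex : ∃ i, m/2 < a i
  · obtain ⟨i, hi⟩ := hex
    refine ⟨Finset.univ.erase i, ?_, ?_⟩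
    · have : ∑ j ∈ Finset.univ.erase i, a j = (∑ j, a j) - a i := by
        rw [Finset.sum_erase_eq_sub (mem_univ i)]
      rw [this]; have := h35 i; linarith
    · have : ∑ j ∈ Finset.univ.erase i, a j = (∑ j, a j) - a i := by
        rw [Finset.sum_erase_eq_sub (mem_univ i)]
      rw [this]; linarith
  push_neg at hex
  by_cases hex2 : ∃ i, m/4 ≤ a i
  · obtain ⟨i, hi⟩ := hex2
    refine ⟨{i}, ?_, ?_⟩ <;> simp only [Finset.sum_singleton]
    · linarith
    · have := hex i; linarith
  push_neg at hex2
  -- all a i < m/4; take a maximizer among subsets with sum ≤ m/2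
  have hne : (Finset.univ.filter (fun J : Finset (Fin p) => ∑ j ∈ J, a j ≤ m/2)).Nonempty := by
    refine ⟨∅, ?_⟩
    simp; linarith
  obtain ⟨J, hJmem, hJmax⟩ := Finset.exists_max_image _ (fun J => ∑ j ∈ J, a j) hne
  simp only [Finset.mem_filter, Finset.mem_univ, true_and] at hJmem
  refine ⟨J, ?_, by linarith⟩
  by_contra hlt
  push_neg at hlt
  -- find i ∉ J
  have hsplit : ∑ j ∈ J, a j + ∑ j ∈ Finset.univ \ J, a j = ∑ j, a j := by
    rw [add_comm, Finset.sum_sdiff (Finset.subset_univ J)]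
  have hcpos : 0 < ∑ j ∈ Finset.univ \ J, a j := by linarith
  obtain ⟨i, hiJ, hai⟩ : ∃ i ∈ Finset.univ \ J, 0 < a i := by
    by_contra h; push_neg at h
    have : ∑ j ∈ Finset.univ \ J, a j ≤ 0 :=
      Finset.sum_nonpos fun j hj => h j hj
    linarith
  have hiJ' : i ∉ J := (Finset.mem_sdiff.mp hiJ).2
  have hins : ∑ j ∈ insert i J, a j = a i + ∑ j ∈ J, a j := Finset.sum_insert hiJ'
  have hmem' : insert i J ∈ Finset.univ.filter (fun J : Finset (Fin p) => ∑ j ∈ J, a j ≤ m/2) := by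
    simp only [Finset.mem_filter, Finset.mem_univ, true_and, hins]
    have := hex2 i; linarith
  have := hJmax _ hmem'
  rw [hins] at this
  linarith


/-- Let `K = S ⊔ X₁ ⊔ … ⊔ X_p` be a finite measurable partition and `B ⊆ K` measurable
with `0 < μ(B) < ∞`. If `μ(B ∩ X_i) ≤ (3/5)μ(B)` for every `i`, then either
`μ(B ∩ S) ≥ (3/20)μ(B)`, or some union of parts satisfies
`(1/4)μ(B) ≤ μ(B ∩ ⋃_{j∈J} X_j) ≤ (1/2)μ(B)`. -/
theorem partition_quarter_half
    {Ω : Type*} [MeasurableSpace Ω] (μ : Measure Ω)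
    (p : ℕ) (K S B : Set Ω) (Xs : Fin p → Set Ω)
    (hSm : MeasurableSet S) (hXm : ∀ i, MeasurableSet (Xs i)) (hKm : MeasurableSet K)
    (hBm : MeasurableSet B)
    (hdSX : ∀ i, Disjoint S (Xs i)) (hdXX : Pairwise (Function.onFun Disjoint Xs))
    (hK : S ∪ (⋃ i, Xs i) = K) (hBK : B ⊆ K)
    (hB0 : 0 < μ B) (hBfin : μ B < ∞)
    (hXi : ∀ i, μ (B ∩ Xs i) ≤ (3 / 5 : ℝ≥0∞) * μ B) :
    (3 / 20 : ℝ≥0∞) * μ B ≤ μ (B ∩ S) ∨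
      ∃ J : Finset (Fin p),
        (1 / 4 : ℝ≥0∞) * μ B ≤ μ (B ∩ ⋃ j ∈ J, Xs j) ∧
        μ (B ∩ ⋃ j ∈ J, Xs j) ≤ (1 / 2 : ℝ≥0∞) * μ B := by
  by_cases hS : (3 / 20 : ℝ≥0∞) * μ B ≤ μ (B ∩ S)
  · exact Or.inl hS
  right
  push_neg at hS
  -- decomposition of B
  have hBdecomp : B = (B ∩ S) ∪ ⋃ i, B ∩ Xs i := by
    rw [← Set.inter_iUnion, ← Set.inter_union_distrib_left, hK,
      Set.inter_eq_self_of_subset_left hBK]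
  have hμsum : μ B = μ (B ∩ S) + ∑ i, μ (B ∩ Xs i) := by
    conv_lhs => rw [hBdecomp]
    rw [measure_union _ (MeasurableSet.iUnion fun i => hBm.inter (hXm i)),
      measure_iUnion _ (fun i => hBm.inter (hXm i))]
    · rw [tsum_fintype]
    · exact fun i j hij =>
        ((hdXX hij).inter_left' B).inter_right' B
    · exact Set.disjoint_iUnion_right.mpr fun i =>
        ((hdSX i).inter_left' B).inter_right' B
  -- finiteness
  have hSfin : μ (B ∩ S) ≠ ∞ :=
    ((measure_mono Set.inter_subset_left).trans_lt hBfin).ne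
  have hXfin : ∀ i, μ (B ∩ Xs i) ≠ ∞ := fun i =>
    ((measure_mono Set.inter_subset_left).trans_lt hBfin).ne
  set m : ℝ := (μ B).toReal with hm_def
  have hm : 0 < m := ENNReal.toReal_pos hB0.ne' hBfin.ne
  set a : Fin p → ℝ := fun i => (μ (B ∩ Xs i)).toReal with ha_def
  have hsum_real : (μ (B ∩ S)).toReal + ∑ i, a i = m := by
    rw [hm_def, hμsum, ENNReal.toReal_add hSfin (by
      exact (ENNReal.sum_lt_top.mpr fun i _ => (hXfin i).lt_top).ne),
      ENNReal.toReal_sum fun i _ => hXfin i]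
  have hSlt : (μ (B ∩ S)).toReal < 3/20 * m := by
    have := ENNReal.toReal_lt_toReal hSfin (by
      exact (ENNReal.mul_lt_top (ENNReal.div_lt_top (by norm_num) (by norm_num)) hBfin).ne) |>.mpr hS
    calc (μ (B ∩ S)).toReal < ((3 / 20 : ℝ≥0∞) * μ B).toReal := this
      _ = 3/20 * m := by
        rw [ENNReal.toReal_mul]; norm_num; rfl
  have h35 : ∀ i, a i ≤ 3/5 * m := by
    intro i
    have := ENNReal.toReal_le_toReal (hXfin i) (by
      exact (ENNReal.mul_lt_top (ENNReal.div_lt_top (by norm_num) (by norm_num)) hBfin).ne) |>.mpr (hXi i)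
    calc a i ≤ ((3 / 5 : ℝ≥0∞) * μ B).toReal := this
      _ = 3/5 * m := by rw [ENNReal.toReal_mul]; norm_num; rfl
  have h0 : ∀ i, 0 ≤ a i := fun i => ENNReal.toReal_nonneg
  have hSnn : 0 ≤ (μ (B ∩ S)).toReal := ENNReal.toReal_nonneg
  obtain ⟨J, hJlo, hJhi⟩ := real_helper p a m hm h0 h35 (by linarith) (by linarith)
  have hJeq : μ (B ∩ ⋃ j ∈ J, Xs j) = ∑ j ∈ J, μ (B ∩ Xs j) := by
    rw [Set.inter_iUnion₂]
    exact measure_biUnion_finset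
      (fun i _ j _ hij => ((hdXX hij).inter_left' B).inter_right' B)
      (fun i _ => hBm.inter (hXm i))
  have hJfin : μ (B ∩ ⋃ j ∈ J, Xs j) ≠ ∞ :=
    ((measure_mono Set.inter_subset_left).trans_lt hBfin).ne
  have hJreal : (μ (B ∩ ⋃ j ∈ J, Xs j)).toReal = ∑ j ∈ J, a j := by
    rw [hJeq, ENNReal.toReal_sum fun i _ => hXfin i]
  refine ⟨J, ?_, ?_⟩
  · rw [← ENNReal.toReal_le_toReal
      (ENNReal.mul_lt_top (ENNReal.div_lt_top (by norm_num) (by norm_num)) hBfin).ne hJfin,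
      hJreal, ENNReal.toReal_mul]
    calc ((1 : ℝ≥0∞) / 4).toReal * (μ B).toReal = 1/4 * m := by norm_num; rfl
      _ ≤ ∑ j ∈ J, a j := hJlo
  · rw [← ENNReal.toReal_le_toReal hJfin
      (ENNReal.mul_lt_top (ENNReal.div_lt_top (by norm_num) (by norm_num)) hBfin).ne,
      hJreal, ENNReal.toReal_mul]
    calc ∑ j ∈ J, a j ≤ 1/2 * m := hJhi
      _ = ((1 : ℝ≥0∞) / 2).toReal * (μ B).toReal := by norm_num; rfl
end

section
/- Let H and G be metric spaces in which any two distinct points are at distance ≥ 1 and all balls are finite, and let f : H → G be a map. Let ρ₋ : [0,∞) → [0,∞) be a non-decreasing function with ρ₋(d(x,y)) ≤ d(f(x),f(y)) for all x,y ∈ H. Assume: (i) there are constants C ≥ 1 and p ≥ 1 such that #B_H(x,r) ≤ C·r^p for every x ∈ H and every r ≥ 1; and (ii) there are an integer n ≥ 2, a constant α > 0 and a radius r₁ ≥ 1 such that for every r ≥ r₁ there exists h_r ∈ H with #(B_G(f(h_r), r) ∩ f(H)) ≥ α·r^{n−1}. Then there exists a constant C' > 0 such that ρ₋(r) ≤ C'·r^{p/(n−1)}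 + C' for all r ≥ 0. -/
/-!
If `ρ₋(s) > r`, then every point whose image lies in `B_G(f h, r)` is at distance `< s` from
`h`, so `B_G(f h, r) ∩ f(H)` is the image of a subset of `B_H(h, s)` and has at most
`C·s^p` points. Choosing `r` with `α·r^{n−1} > C·s^p`, i.e. `r ≈ (C/α)^{1/(n−1)}·s^{p/(n−1)}`,
therefore forces `ρ₋(s) ≤ r`.
-/

open Metric Set

theorem Monotone.le_of_ncard_closedBall_lt_ncard_image
    {H G : Type*} [PseudoMetricSpace H] [PseudoMetricSpace G] {f : H → G} {ρ : ℝ → ℝ}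
    (hρmono : Monotone ρ) (hρ : ∀ x y : H, ρ (dist x y) ≤ dist (f x) (f y))
    {h : H} {s r : ℝ} (hfin : (closedBall h s).Finite)
    (hcard : (closedBall h s).ncard < (closedBall (f h) r ∩ range f).ncard) :
    ρ s ≤ r := by
  by_contra! hrs
  have hpre : f ⁻¹' closedBall (f h) r ⊆ closedBall h s := fun x hx =>
    mem_closedBall'.2 <| (hρmono.reflect_lt <|
      ((hρ h x).trans (mem_closedBall'.1 hx)).trans_lt hrs).le
  have himage : closedBall (f h) r ∩ range f ⊆ f '' closedBall h s := by
    rw [← image_preimage_eq_inter_range]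
    exact image_mono hpre
  exact hcard.not_ge <|
    (ncard_le_ncard himage (hfin.image f)).trans (ncard_image_le hfin)

theorem Real.rpow_max_one_le {s : ℝ} (hs : 0 ≤ s) (q : ℝ) : max s 1 ^ q ≤ s ^ q + 1 := by
  rcases le_total s 1 with hs1 | hs1
  · rw [max_eq_right hs1, Real.one_rpow]
    linarith [Real.rpow_nonneg hs q]
  · rw [max_eq_left hs1]
    linarith

theorem Real.mul_rpow_lt_mul_rpow_of_root_lt {C α e p t r : ℝ} (hC : 0 ≤ C) (hα : 0 < α)
    (he : 0 < e) (ht : 0 ≤ t) (hr : (C / α) ^ e⁻¹ * t ^ (p / e) < r) :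
    C * t ^ p < α * r ^ e := by
  have hroot : (C * t ^ p / α) ^ e⁻¹ = (C / α) ^ e⁻¹ * t ^ (p / e) := by
    rw [mul_div_right_comm, Real.mul_rpow (by positivity) (by positivity),
      ← Real.rpow_mul ht, ← div_eq_mul_inv]
  rw [← div_lt_iff₀' hα, ← Real.rpow_inv_lt_iff_of_pos (by positivity) _ he, hroot]
  · exact hr
  · exact (by positivity : (0 : ℝ) ≤ _).trans hr.le

theorem distortion_upper_bound_general
    {H G : Type*} [MetricSpace H] [MetricSpace G]
    (hHfin : ∀ (x : H) (r : ℝ), (Metric.closedBall x r).Finite)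
    (f : H → G) (ρm : ℝ → ℝ) (hρmono : Monotone ρm)
    (hρ : ∀ x y : H, ρm (dist x y) ≤ dist (f x) (f y))
    (C p : ℝ) (hC : 1 ≤ C)
    (hgrowth : ∀ (x : H) (r : ℝ), 1 ≤ r → ((Metric.closedBall x r).ncard : ℝ) ≤ C * r ^ p)
    (n : ℕ) (hn : 2 ≤ n) (α : ℝ) (hα : 0 < α) (r₁ : ℝ) (hr₁ : 1 ≤ r₁)
    (himg : ∀ r : ℝ, r₁ ≤ r → ∃ h : H,
      α * r ^ ((n : ℝ) - 1) ≤ ((Metric.closedBall (f h) r ∩ Set.range f).ncard : ℝ)) :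
    ∃ C' > (0 : ℝ), ∀ r : ℝ, 0 ≤ r → ρm r ≤ C' * r ^ (p / ((n : ℝ) - 1)) + C' := by
  have he : (0 : ℝ) < n - 1 := by
    have : (2 : ℝ) ≤ n := by exact_mod_cast hn
    linarith
  set q := p / ((n : ℝ) - 1)
  set K := (C / α) ^ ((n : ℝ) - 1)⁻¹
  have hK : 0 ≤ K := by positivity
  refine ⟨r₁ + 1 + K, by linarith, fun s hs => ?_⟩
  set t := max s 1
  have ht : 1 ≤ t := le_max_right s 1
  have hKt : 0 ≤ K * t ^ q := mul_nonneg hK (Real.rpow_nonneg (by linarith) q)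
  set r := max r₁ (K * t ^ q + 1)
  obtain ⟨h, hh⟩ := himg r (le_max_left _ _)
  have hball : C * t ^ p < α * r ^ ((n : ℝ) - 1) :=
    Real.mul_rpow_lt_mul_rpow_of_root_lt (by linarith) hα he (by linarith)
      ((lt_add_one _).trans_le (le_max_right _ _))
  have hρt : ρm t ≤ r := hρmono.le_of_ncard_closedBall_lt_ncard_image hρ (hHfin h t) <| by
    exact_mod_cast ((hgrowth h t ht).trans_lt hball).trans_le hh
  calc ρm s ≤ ρm t := hρmono (le_max_left s 1)
    _ ≤ r := hρt
    _ ≤ r₁ + 1 + K * t ^ q := max_le (by linarith) (by linarith)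
    _ ≤ r₁ + 1 + K * (s ^ q + 1) := by gcongr; exact Real.rpow_max_one_le hs q
    _ ≤ (r₁ + 1 + K) * s ^ q + (r₁ + 1 + K) := by nlinarith [Real.rpow_nonneg hs q]

/-- Quantitative distortion bound: if `f : H → G` has lower control function `ρ₋`, the
source `H` has polynomial growth of degree `p`, and the image of `f` meets balls of radius
`r` in at least `α·r^{n−1}` points for all large `r`, then `ρ₋(r) ≤ C'·r^{p/(n−1)} + C'`. -/
theorem distortion_upper_bound
    {H G : Type*} [MetricSpace H] [MetricSpace G]
    (hH1 : ∀ x y : H, x ≠ y → 1 ≤ dist x y)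
    (hHfin : ∀ (x : H) (r : ℝ), (Metric.closedBall x r).Finite)
    (hG1 : ∀ x y : G, x ≠ y → 1 ≤ dist x y)
    (hGfin : ∀ (x : G) (r : ℝ), (Metric.closedBall x r).Finite)
    (f : H → G) (ρm : ℝ → ℝ) (hρmono : Monotone ρm)
    (hρ : ∀ x y : H, ρm (dist x y) ≤ dist (f x) (f y))
    (C p : ℝ) (hC : 1 ≤ C) (hp : 1 ≤ p)
    (hgrowth : ∀ (x : H) (r : ℝ), 1 ≤ r → ((Metric.closedBall x r).ncard : ℝ) ≤ C * r ^ p)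
    (n : ℕ) (hn : 2 ≤ n) (α : ℝ) (hα : 0 < α) (r₁ : ℝ) (hr₁ : 1 ≤ r₁)
    (himg : ∀ r : ℝ, r₁ ≤ r → ∃ h : H,
      α * r ^ ((n : ℝ) - 1) ≤ ((Metric.closedBall (f h) r ∩ Set.range f).ncard : ℝ)) :
    ∃ C' > (0 : ℝ), ∀ r : ℝ, 0 ≤ r → ρm r ≤ C' * r ^ (p / ((n : ℝ) - 1)) + C' :=
  distortion_upper_bound_general hHfin f ρm hρmono hρ C p hC hgrowth n hn α hα r₁ hr₁ himg
end
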